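/- arXiv:1512.03455 — 4 statements merged into one kernel-verified Lean document; each statement's English description precedes it below -/
import Mathlib

section
/- Let V be a compact Hausdorff space, g : V → V a local homeomorphism, and (U_j)_{j=1}^M a finite open cover of V such that g restricted to each U_j is injective. Let (χ_j²)_{j=1}^M be a partition of unity subordinate to (U_j), i.e. supp(χ_j) ⊆ U_j and Σ_j χ_j² = 1. Define on E = C(V) the right inner product (f₁|f₂)(x) = Σ_{g(y)=x} conj(f₁(y)) f₂(y) (the transfer operator applied to conj(f₁)f₂). Then (χ_j)_{j=1}^M is a frame for E as a right C(V)-module: for every f ∈ C(V) and x ∈ V, Σ_j χ_j(x) · [(χ_j|f) ∘ g](x) = f(x). -/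
/-- Frame property for the module `E = C(V)` of a local homeomorphism `g : V → V`:
if `(χ_j²)` is a partition of unity subordinate to a cover `(U_j)` on whose members `g`
is injective, then for every continuous `f` and every `x`,
`Σ_j χ_j(x) · ((χ_j|f) ∘ g)(x) = f(x)`, where `(χ_j|f)(z) = Σ_{g(y)=z} χ_j(y) f(y)`
is the transfer-operator inner product. -/
theorem stmt3 {V : Type*} [TopologicalSpace V] [CompactSpace V]
    (g : V → V) (hg : Continuous g)
    (hfin : ∀ x : V, (g ⁻¹' {x}).Finite)
    (M : ℕ) (U : Fin M → Set V) (hUopen : ∀ j, IsOpen (U j))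
    (hUinj : ∀ j, Set.InjOn g (U j))
    (χ : Fin M → V → ℝ) (hχc : ∀ j, Continuous (χ j))
    (hsupp : ∀ j, Function.support (χ j) ⊆ U j)
    (hpart : ∀ x, ∑ j, (χ j x) ^ 2 = 1)
    (f : V → ℂ) (hf : Continuous f) (x : V) :
    ∑ j, (χ j x : ℂ) * ∑ y ∈ (hfin (g x)).toFinset, (χ j y : ℂ) * f y = f x := by
  have key : ∀ j : Fin M,
      (χ j x : ℂ) * ∑ y ∈ (hfin (g x)).toFinset, (χ j y : ℂ) * f y
        = ((χ j x : ℂ))^2 * f x := by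
    intro j
    by_cases h0 : χ j x = 0
    · simp [h0]
    · have hx : x ∈ U j := hsupp j h0
      have hmem : x ∈ (hfin (g x)).toFinset := by
        simp [Set.Finite.mem_toFinset]
      have : ∑ y ∈ (hfin (g x)).toFinset, (χ j y : ℂ) * f y = (χ j x : ℂ) * f x := by
        apply Finset.sum_eq_single_of_mem x hmem
        intro y hy hne
        by_cases hy0 : χ j y = 0
        · simp [hy0]
        · exfalso
          have hyU : y ∈ U j := hsupp j hy0
          have hgy : g y = g x := by
            have := Set.Finite.mem_toFinset (hfin (g x)) |>.mp hy
            simpa using this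
          exact hne (hUinj j hyU hx hgy)
      rw [this]; ring
  rw [Finset.sum_congr rfl fun j _ => key j, ← Finset.sum_mul]
  have : ∑ j : Fin M, ((χ j x : ℂ))^2 = 1 := by
    have := hpart x
    push_cast [← this]
    norm_cast
  rw [this, one_mul]
end

section
/- Let A be a unital C*-algebra, E a bi-Hilbertian A-bimodule with 𝔮₁ of closed range and range projection P₁, and suppose there exists c_ℓ ∈ A such that c_ℓ P_ℓ = 𝔮_ℓ P_ℓ (where P_ℓ = P₁^{⊗ℓ} and 𝔮_ℓ = 𝔮₁^{⊗ℓ}). Then c_ℓ = Φ_ℓ(P_ℓ)^{-1}; in particular Φ_ℓ(P_ℓ) is invertible in A and c_ℓ is central and invertible in A. -/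
/-- If `c P_ℓ = 𝔮_ℓ P_ℓ` for some `c ∈ A`, then `c = Φ_ℓ(P_ℓ)⁻¹`; in particular
`Φ_ℓ(P_ℓ)` is invertible and `c` is central and invertible in `A`.  Here `F` plays
the role of `E^{⊗ℓ}` with left inner product `lip`, frame `e`, left/right actions,
range projection `P` of `𝔮_ℓ = q` (so `q P = q`), and `Φ_ℓ(T) = Σ_ρ {}_A(T e_ρ|e_ρ)`;
the hypothesis `hΦq` records `Φ_ℓ(𝔮_ℓ) = 1`. -/
theorem stmt8
    {A : Type*} [NormedRing A] [StarRing A] [CStarRing A] [CompleteSpace A]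
    {F : Type*} [NormedAddCommGroup F]
    {ι : Type*} [Fintype ι]
    (lact : A → F → F) (ract : F → A → F)
    (lip : F → F → A) (e : ι → F)
    (q P : F → F) (c : A)
    (hΦq : ∑ ρ : ι, lip (q (e ρ)) (e ρ) = 1)
    (hlipl : ∀ (a : A) (x y : F), lip (lact a x) y = a * lip x y)
    (hPP : ∀ x, P (P x) = P x)
    (hPsa : ∀ x y, lip (P x) y = lip x (P y))
    (hqP : ∀ x, q (P x) = q x)
    (hPq : ∀ x, P (q x) = q x)
    (hql : ∀ (a : A) (x : F), q (lact a x) = lact a (q x))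
    (hqr : ∀ (a : A) (x : F), q (ract x a) = ract (q x) a)
    (hPl : ∀ (a : A) (x : F), P (lact a x) = lact a (P x))
    (hPr : ∀ (a : A) (x : F), P (ract x a) = ract (P x) a)
    (hfaith : ∀ a b : A, (∀ x : F, lact a x = lact b x) → a = b)
    (hc : ∀ x : F, q (P x) = lact c (P x)) :
    c * (∑ ρ : ι, lip (P (e ρ)) (e ρ)) = 1 ∧
    (∑ ρ : ι, lip (P (e ρ)) (e ρ)) * c = 1 ∧
    (∀ a : A, c * a = a * c) := by
  set Φ : A := ∑ ρ : ι, lip (P (e ρ)) (e ρ) with hΦ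
  -- Key identity: c * (a * Φ) = a for all a.
  have key : ∀ a : A, c * (a * Φ) = a := by
    intro a
    have h1 : ∀ ρ : ι, c * (a * lip (P (e ρ)) (e ρ)) = a * lip (q (e ρ)) (e ρ) := by
      intro ρ
      calc c * (a * lip (P (e ρ)) (e ρ))
          = c * lip (lact a (P (e ρ))) (e ρ) := by rw [hlipl]
        _ = c * lip (P (lact a (e ρ))) (e ρ) := by rw [hPl]
        _ = lip (lact c (P (lact a (e ρ)))) (e ρ) := by rw [hlipl]
        _ = lip (q (P (lact a (e ρ)))) (e ρ) := by rw [hc]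
        _ = lip (q (lact a (e ρ))) (e ρ) := by rw [hqP]
        _ = lip (lact a (q (e ρ))) (e ρ) := by rw [hql]
        _ = a * lip (q (e ρ)) (e ρ) := by rw [hlipl]
    calc c * (a * Φ)
        = ∑ ρ : ι, c * (a * lip (P (e ρ)) (e ρ)) := by
          rw [hΦ, Finset.mul_sum, Finset.mul_sum]
      _ = ∑ ρ : ι, a * lip (q (e ρ)) (e ρ) :=
          Finset.sum_congr rfl fun ρ _ => h1 ρ
      _ = a * ∑ ρ : ι, lip (q (e ρ)) (e ρ) := (Finset.mul_sum _ _ _).symm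
      _ = a := by rw [hΦq, mul_one]
  have hcΦ : c * Φ = 1 := by simpa using key 1
  -- Φ is central:
  have hΦcomm : ∀ b : A, Φ * b = b * Φ := by
    intro b
    calc Φ * b = c * (Φ * b * Φ) := (key (Φ * b)).symm
      _ = (c * Φ) * (b * Φ) := by simp only [mul_assoc]
      _ = b * Φ := by rw [hcΦ, one_mul]
  have hΦc : Φ * c = 1 := by rw [hΦcomm c, hcΦ]
  refine ⟨hcΦ, hΦc, fun a => ?_⟩
  calc c * a = c * (a * (Φ * c)) := by rw [hΦc, mul_one]
    _ = (c * (a * Φ)) * c := by simp only [mul_assoc]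
    _ = a * c := by rw [key]
end

section
/- Let A be an N×N matrix over {0,1} and Ω_A the associated one-sided subshift. With E = {}_{id}C(Ω_A)_{σ*} and the Pimsner six-term exact sequence in K-homology for O_A ≅ O_E over C(Ω_A), using that K¹(C(Ω_A)) = 0 (Ω_A is totally disconnected compact), the sequence reduces to the four-term exact sequence 0 → K⁰(O_A) → K⁰(C(Ω_A)) → K⁰(C(Ω_A)) → K¹(O_A) → 0, where the middle map is 1 - [E]. Identifying K⁰(C(Ω_A)) with Hom(C(Ω_A,ℤ), ℤ) and [E] with the dual of the transfer operator, one obtains K¹(O_A) ≅ ℤ^N / (1 - Aᵀ)ℤ^N. As a purely algebraic consequence: the cokernel of the map (1 - 𝔏*) : Hom(C(Ω_A,ℤ),ℤ) → Hom(C(Ω_A,ℤ),ℤ) is isomorphic to ℤ^N/(1-A)ℤ^N. -/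
/-!
Evaluating a functional on the indicators `χ_i` of the cylinders `[i]` gives a map
`Φ : Hom(C(Ω_A,ℤ),ℤ) → ℤ^N` with `Φ ∘ (1 - 𝔏*) = (1 - A) ∘ Φ`, because `𝔏 χ_i = Σ_k A_ik χ_k`;
`Φ` induces the isomorphism of cokernels.

Surjectivity: `v ≡ Aⁿ v` modulo `(1 - A)ℤ^N`, and by compactness of `Ω_A`, for large `n` the
vector `Aⁿ v` vanishes on every letter that begins no point of `Ω_A`; such a vector is `Φ` of a
combination of point evaluations.

Injectivity: let `Φ φ = (1 - A) u`. The functions depending only on the first `n + 1`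
coordinates (level `n`) exhaust `C(Ω_A,ℤ)`, and `𝔏` maps level `n + 1` into level `n`. Hence the
sequence `ψₙ₊₁ = ψₙ ∘ 𝔏 + φ`, started at a functional `ψ₀` with cylinder values `u`, stabilises
on each level, and its limit `ψ` satisfies `ψ - ψ ∘ 𝔏 = φ`. On level `0` the identity
`ψ₀ - ψ₀ ∘ 𝔏 = φ` is the relation `Φ φ = (1 - A) u`; for this `u` has to vanish on the letters
that begin no point of `Ω_A`, which follows from `Φ φ` vanishing there.
-/

namespace Stmt15

variable (N : ℕ) (A : Fin N → Fin N → Bool)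

/-- The one-sided subshift of finite type Ω_A. -/
def Omega : Type := {x : ℕ → Fin N // ∀ i, A (x i) (x (i + 1)) = true}

instance : TopologicalSpace (Omega N A) :=
  instTopologicalSpaceSubtype

/-- Prepending an admissible letter to a point of Ω_A (the preimages of `x` under the
shift σ are exactly the points `cons j x h`). -/
def cons (j : Fin N) (x : Omega N A) (h : A j (x.1 0) = true) : Omega N A :=
  ⟨fun i => Nat.rec j (fun i _ => x.1 i) i, by
    intro i
    cases i with
    | zero => exact h
    | succ i => exact x.2 i⟩

open PiNat Filter Matrix

lemma exists_addMonoidHom_eq_of_monotone {G H : Type*} [AddZeroClass G] [AddZeroClass H]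
    (S : ℕ → AddSubmonoid G) (hS : Monotone S) (hexh : ∀ g, ∃ n, g ∈ S n)
    (ψ : ℕ → G →+ H) (hψ : ∀ n, ∀ g ∈ S n, ψ (n + 1) g = ψ n g) :
    ∃ Ψ : G →+ H, ∀ n, ∀ g ∈ S n, Ψ g = ψ n g := by
  have hstable : ∀ {g n m}, g ∈ S n → n ≤ m → ψ m g = ψ n g := by
    intro g n m hg hnm
    induction m, hnm using Nat.le_induction with
    | base => rfl
    | succ m hnm ih => rw [hψ m g (hS hnm hg), ih]
  choose level hlevel using hexh
  have hlimit : ∀ n, ∀ g ∈ S n, ψ (level g) g = ψ n g := fun n g hg => by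
    rw [← hstable (hlevel g) (le_max_left _ n), hstable hg (le_max_right _ _)]
  refine ⟨{ toFun := fun g => ψ (level g) g, map_zero' := map_zero _, map_add' := ?_ }, hlimit⟩
  intro g g'
  let n := max (level g) (level g')
  have hg : g ∈ S n := hS (le_max_left _ _) (hlevel g)
  have hg' : g' ∈ S n := hS (le_max_right _ _) (hlevel g')
  show ψ (level (g + g')) (g + g') = ψ (level g) g + ψ (level g') g'
  rw [hlimit n _ (add_mem hg hg'), hlimit n g hg, hlimit n g' hg', map_add]

lemma exists_sub_comp_eq_of_filtration {G H : Type*} [AddCommGroup G] [AddCommGroup H]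
    (S : ℕ → AddSubgroup G) (hS : Monotone S) (hexh : ∀ g, ∃ n, g ∈ S n)
    (L : G →+ G) (hLS : ∀ n, ∀ g ∈ S (n + 1), L g ∈ S n)
    (φ ψ₀ : G →+ H) (hψ₀ : ∀ g ∈ S 0, ψ₀ g - ψ₀ (L g) = φ g) :
    ∃ ψ : G →+ H, ψ - ψ.comp L = φ := by
  let ψ (n : ℕ) : G →+ H := Nat.rec ψ₀ (fun _ ψ => ψ.comp L + φ) n
  have hstable : ∀ n, ∀ g ∈ S n, ψ (n + 1) g = ψ n g := by
    intro n
    induction n with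
    | zero =>
      intro g hg
      show ψ₀ (L g) + φ g = ψ₀ g
      rw [← hψ₀ g hg]
      abel
    | succ n ih =>
      intro g hg
      show ψ (n + 1) (L g) + φ g = ψ n (L g) + φ g
      rw [ih _ (hLS n g hg)]
  obtain ⟨Ψ, hΨ⟩ := exists_addMonoidHom_eq_of_monotone (fun n => (S n).toAddSubmonoid)
    (fun _ _ h => AddSubgroup.toAddSubmonoid_mono (hS h)) hexh ψ hstable
  refine ⟨Ψ, AddMonoidHom.ext fun g => ?_⟩
  obtain ⟨n, hn⟩ := hexh g
  rw [AddMonoidHom.sub_apply, AddMonoidHom.comp_apply, hΨ (n + 1) g (hS n.le_succ hn),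
    hΨ n _ (hLS n g (hS n.le_succ hn))]
  show ψ n (L g) + φ g - ψ n (L g) = φ g
  abel

noncomputable def quotientAddEquivOfComap {G H : Type*} [AddCommGroup G] [AddCommGroup H]
    (f : G →+ H) (S : AddSubgroup G) (T : AddSubgroup H) (hS : ∀ g, g ∈ S ↔ f g ∈ T)
    (hT : ∀ h, ∃ g, h - f g ∈ T) : G ⧸ S ≃+ H ⧸ T :=
  (QuotientAddGroup.quotientAddEquivOfEq (N := ((QuotientAddGroup.mk' T).comp f).ker)
      (by ext g; simp [hS])).trans
    (QuotientAddGroup.quotientKerEquivOfSurjective _ fun q => by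
      induction q using QuotientAddGroup.induction_on with
      | H h =>
        obtain ⟨g, hg⟩ := hT h
        exact ⟨g, (QuotientAddGroup.eq_iff_sub_mem.mpr (by simpa using T.neg_mem hg))⟩)

lemma locallyConstant_sum_apply {X M ι : Type*} [TopologicalSpace X] [AddCommMonoid M]
    (s : Finset ι) (f : ι → LocallyConstant X M) (x : X) : (∑ i ∈ s, f i) x = ∑ i ∈ s, f i x :=
  map_sum (LocallyConstant.evalAddMonoidHom x) f s

lemma isClosed_setOf_admissible (k : ℕ) :
    IsClosed {x : ℕ → Fin N | A (x k) (x (k + 1)) = true} :=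
  isClosed_eq ((continuous_of_discreteTopology (f := fun p : Fin N × Fin N => A p.1 p.2)).comp'
    (f := fun x : ℕ → Fin N => (x k, x (k + 1)))
    ((continuous_apply k).prodMk (continuous_apply (k + 1)))) continuous_const

instance : CompactSpace (Omega N A) := by
  have : IsClosed {x : ℕ → Fin N | ∀ i, A (x i) (x (i + 1)) = true} := by
    rw [Set.ofPred_forall]
    exact isClosed_iInter (isClosed_setOf_admissible N A)
  exact isCompact_iff_compactSpace.mp this.isCompact

def constOnCylinders (n : ℕ) : AddSubgroup (LocallyConstant (Omega N A) ℤ) where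
  carrier := {f | ∀ x y : Omega N A, y.1 ∈ cylinder x.1 n → f y = f x}
  add_mem' hf hg x y hxy := by simp [hf x y hxy, hg x y hxy]
  zero_mem' _ _ _ := rfl
  neg_mem' hf x y hxy := by simp [hf x y hxy]

lemma constOnCylinders_mono : Monotone (constOnCylinders N A) :=
  fun _ _ hmn _ hf x y hxy => hf x y (cylinder_anti _ hmn hxy)

lemma exists_mem_constOnCylinders (f : LocallyConstant (Omega N A) ℤ) :
    ∃ n, f ∈ constOnCylinders N A n := by
  let U (n : ℕ) : Set (Omega N A) := {x | ∀ y : Omega N A, y.1 ∈ cylinder x.1 n → f y = f x}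
  have hU : ∀ n, IsOpen (U n) := by
    refine fun n => isOpen_iff_forall_mem_open.mpr fun x hx => ?_
    refine ⟨Subtype.val ⁻¹' cylinder x.1 n, fun z hz y hy => ?_,
      (isOpen_cylinder _ _ _).preimage continuous_subtype_val, self_mem_cylinder _ _⟩
    replace hz : z.1 ∈ cylinder x.1 n := hz
    rw [hx y (mem_cylinder_iff_eq.mp hz ▸ hy), hx z hz]
  have hcover : ∀ x, ∃ n, x ∈ U n := by
    intro x
    obtain ⟨V, hV, hVf⟩ := isOpen_induced_iff.mp (f.isLocallyConstant.isOpen_fiber (f x))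
    have hxV : x.1 ∈ V := (Set.ext_iff.mp hVf x).mpr rfl
    obtain ⟨_, ⟨z, n, rfl⟩, hxz, hzV⟩ :=
      (isTopologicalBasis_cylinders _).exists_subset_of_mem_open hxV hV
    refine ⟨n, fun y hy => (Set.ext_iff.mp hVf y).mp (hzV ?_)⟩
    exact mem_cylinder_iff_eq.mp hxz ▸ hy
  obtain ⟨n, hn⟩ := isCompact_univ.elim_directed_cover U hU
    (fun x _ => Set.mem_iUnion.mpr (hcover x))
    (Monotone.directed_le fun _ _ hmn _ hx y hy => hx y (cylinder_anti _ hmn hy))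
  exact ⟨n, fun x y hxy => hn (Set.mem_univ x) y hxy⟩

def IsTransferOperator
    (L : LocallyConstant (Omega N A) ℤ →+ LocallyConstant (Omega N A) ℤ) : Prop :=
  ∀ f x, L f x = ∑ j : Fin N, if h : A j (x.1 0) = true then f (cons N A j x h) else 0

lemma transfer_mem_constOnCylinders
    {L : LocallyConstant (Omega N A) ℤ →+ LocallyConstant (Omega N A) ℤ}
    (hL : IsTransferOperator N A L)
    {n : ℕ} {f : LocallyConstant (Omega N A) ℤ} (hf : f ∈ constOnCylinders N A (n + 2)) :
    L f ∈ constOnCylinders N A (n + 1) := by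
  intro x y hxy
  rw [mem_cylinder_iff] at hxy
  have h0 : y.1 0 = x.1 0 := hxy 0 n.succ_pos
  rw [hL, hL]
  refine Finset.sum_congr rfl fun j _ => ?_
  by_cases hj : A j (x.1 0) = true
  · rw [dif_pos (h0 ▸ hj), dif_pos hj]
    refine hf _ _ (mem_cylinder_iff.mpr fun k hk => ?_)
    cases k with
    | zero => rfl
    | succ k => exact hxy k (by omega)
  · rw [dif_neg (h0 ▸ hj), dif_neg hj]

def cylinderIndicator (i : Fin N) : LocallyConstant (Omega N A) ℤ :=
  ⟨fun x => if x.1 0 = i then 1 else 0,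
    (IsLocallyConstant.of_discrete fun j : Fin N => if j = i then (1 : ℤ) else 0).comp_continuous
      ((continuous_apply 0).comp continuous_subtype_val)⟩

lemma cylinderIndicator_apply (i : Fin N) (x : Omega N A) :
    cylinderIndicator N A i x = if x.1 0 = i then 1 else 0 := rfl

lemma cylinderIndicator_cons (i j : Fin N) (x : Omega N A) (h : A j (x.1 0) = true) :
    cylinderIndicator N A i (cons N A j x h) = if j = i then 1 else 0 := rfl

def adjMatrix : Matrix (Fin N) (Fin N) ℤ := Matrix.of fun i j => if A i j = true then 1 else 0

lemma transfer_cylinderIndicator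
    {L : LocallyConstant (Omega N A) ℤ →+ LocallyConstant (Omega N A) ℤ}
    (hL : IsTransferOperator N A L)
    (i : Fin N) :
    L (cylinderIndicator N A i) = ∑ k, adjMatrix N A i k • cylinderIndicator N A k := by
  ext x
  simp only [hL _ x, cylinderIndicator_cons, locallyConstant_sum_apply, LocallyConstant.coe_smul,
    Pi.smul_apply, smul_eq_mul]
  simp only [cylinderIndicator_apply, adjMatrix, Matrix.of_apply, ite_mul, one_mul, zero_mul]
  rw [Finset.sum_eq_single i (fun j _ hj => by simp [hj]) (by simp),
    Finset.sum_eq_single (x.1 0) (fun k _ hk => by simp [Ne.symm hk]) (by simp)]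
  simp

def IsLive (i : Fin N) : Prop := ∃ x : Omega N A, x.1 0 = i

lemma cylinderIndicator_eq_zero {i : Fin N} (h : ¬IsLive N A i) :
    cylinderIndicator N A i = 0 := by
  ext x
  simp only [cylinderIndicator_apply, LocallyConstant.coe_zero, Pi.zero_apply]
  exact if_neg fun hx => h ⟨x, hx⟩

lemma isLive_of_adj {i j : Fin N} (hij : A i j = true) (hj : IsLive N A j) : IsLive N A i := by
  obtain ⟨x, rfl⟩ := hj
  exact ⟨cons N A i x hij, rfl⟩

open Classical in
/-- Evaluation at a chosen point of the cylinder `[i]`, and `0` when `[i]` is empty. -/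
noncomputable def evalCylinder (i : Fin N) : LocallyConstant (Omega N A) ℤ →+ ℤ :=
  if h : IsLive N A i then LocallyConstant.evalAddMonoidHom h.choose else 0

lemma evalCylinder_cylinderIndicator {i : Fin N} (hi : IsLive N A i) (k : Fin N) :
    evalCylinder N A i (cylinderIndicator N A k) = if i = k then 1 else 0 := by
  simp [evalCylinder, hi, cylinderIndicator_apply, hi.choose_spec]

lemma eq_sum_of_mem_constOnCylinders_one {f : LocallyConstant (Omega N A) ℤ}
    (hf : f ∈ constOnCylinders N A 1) :
    f = ∑ i, evalCylinder N A i f • cylinderIndicator N A i := by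
  ext x
  have hx : IsLive N A (x.1 0) := ⟨x, rfl⟩
  simp only [evalCylinder, zsmul_eq_mul, locallyConstant_sum_apply, LocallyConstant.coe_mul,
    Pi.mul_apply, cylinderIndicator_apply, mul_ite, mul_one, mul_zero, Finset.sum_ite_eq,
    Finset.mem_univ, if_true, hx, dif_pos, LocallyConstant.evalAddMonoidHom_apply]
  exact hf _ _ (mem_cylinder_iff.mpr fun k hk => by
    rw [Nat.lt_one_iff.mp hk]; exact hx.choose_spec.symm)

def cylinderValues : (LocallyConstant (Omega N A) ℤ →+ ℤ) →+ (Fin N → ℤ) where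
  toFun φ i := φ (cylinderIndicator N A i)
  map_zero' := rfl
  map_add' _ _ := rfl

lemma cylinderValues_sub_comp_transfer
    {L : LocallyConstant (Omega N A) ℤ →+ LocallyConstant (Omega N A) ℤ}
    (hL : IsTransferOperator N A L)
    (ψ : LocallyConstant (Omega N A) ℤ →+ ℤ) :
    cylinderValues N A (ψ - ψ.comp L)
      = cylinderValues N A ψ - adjMatrix N A *ᵥ cylinderValues N A ψ := by
  funext i
  simp only [cylinderValues, AddMonoidHom.coe_mk, ZeroHom.coe_mk, AddMonoidHom.sub_apply,
    AddMonoidHom.comp_apply, transfer_cylinderIndicator N A hL, map_sum, map_zsmul, Pi.sub_apply,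
    mulVec, dotProduct, smul_eq_mul]

lemma eq_of_cylinderValues_eq {α β : LocallyConstant (Omega N A) ℤ →+ ℤ}
    (h : cylinderValues N A α = cylinderValues N A β) {f : LocallyConstant (Omega N A) ℤ}
    (hf : f ∈ constOnCylinders N A 1) : α f = β f := by
  rw [eq_sum_of_mem_constOnCylinders_one N A hf]
  simp only [map_sum, map_zsmul]
  exact Finset.sum_congr rfl fun i _ => congrArg _ (congrFun h i)

noncomputable def liftCylinderValues (u : Fin N → ℤ) : LocallyConstant (Omega N A) ℤ →+ ℤ :=
  ∑ i, u i • evalCylinder N A i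

lemma cylinderValues_liftCylinderValues {u : Fin N → ℤ} (hu : ∀ i, ¬IsLive N A i → u i = 0) :
    cylinderValues N A (liftCylinderValues N A u) = u := by
  funext k
  have hterm : ∀ i,
      u i * evalCylinder N A i (cylinderIndicator N A k) = if i = k then u i else 0 := by
    intro i
    by_cases hi : IsLive N A i
    · simp [evalCylinder_cylinderIndicator N A hi]
    · simp [hu i hi]
  simp [cylinderValues, liftCylinderValues, hterm]

def pathsFrom (n : ℕ) (i : Fin N) : Set (ℕ → Fin N) :=
  {x | x 0 = i ∧ ∀ k < n, A (x k) (x (k + 1)) = true}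

lemma pathsFrom_anti (i : Fin N) : Antitone fun n => pathsFrom N A n i :=
  fun _ _ hmn _ hx => ⟨hx.1, fun k hk => hx.2 k (hk.trans_le hmn)⟩

lemma isClosed_pathsFrom (n : ℕ) (i : Fin N) : IsClosed (pathsFrom N A n i) := by
  have : pathsFrom N A n i
      = {x | x 0 = i} ∩ ⋂ k, ⋂ (_ : k < n), {x | A (x k) (x (k + 1)) = true} := by
    ext; simp [pathsFrom]
  rw [this]
  exact (isClosed_eq (continuous_apply 0) continuous_const).inter
    (isClosed_iInter fun k => isClosed_iInter fun _ => isClosed_setOf_admissible N A k)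

lemma isLive_of_forall_nonempty {i : Fin N} (h : ∀ n, (pathsFrom N A n i).Nonempty) :
    IsLive N A i := by
  obtain ⟨x, hx⟩ := IsCompact.nonempty_iInter_of_sequence_nonempty_isCompact_isClosed
    (fun n => pathsFrom N A n i) (fun n => pathsFrom_anti N A i n.le_succ) h
    (isClosed_pathsFrom N A 0 i).isCompact (isClosed_pathsFrom N A · i)
  rw [Set.mem_iInter] at hx
  exact ⟨⟨x, fun k => (hx (k + 1)).2 k k.lt_succ_self⟩, (hx 0).1⟩

lemma pathsFrom_nonempty_of_adjMatrix_pow_ne_zero {n : ℕ} {i j : Fin N}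
    (h : (adjMatrix N A ^ n) i j ≠ 0) : (pathsFrom N A n i).Nonempty := by
  induction n generalizing i with
  | zero => exact ⟨fun _ => i, rfl, fun k hk => absurd hk k.not_lt_zero⟩
  | succ n ih =>
    rw [pow_succ', mul_apply] at h
    obtain ⟨l, -, hl⟩ := Finset.exists_ne_zero_of_sum_ne_zero h
    have hil : A i l = true := by
      by_contra hA
      simp [adjMatrix, hA] at hl
    obtain ⟨x, hx0, hx⟩ := ih (right_ne_zero_of_mul hl)
    refine ⟨fun k => Nat.rec i (fun k _ => x k) k, rfl, fun k hk => ?_⟩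
    cases k with
    | zero => show A i (x 0) = true; rwa [hx0]
    | succ k => exact hx k (by omega)

lemma eventually_adjMatrix_pow_eq_zero :
    ∀ᶠ n in atTop, ∀ i j, ¬IsLive N A i → (adjMatrix N A ^ n) i j = 0 := by
  refine eventually_all.2 fun i => ?_
  by_cases hi : IsLive N A i
  · exact Eventually.of_forall fun _ _ h => absurd hi h
  obtain ⟨n₀, hn₀⟩ : ∃ n₀, ¬(pathsFrom N A n₀ i).Nonempty := by
    by_contra! h
    exact hi (isLive_of_forall_nonempty N A h)
  filter_upwards [eventually_ge_atTop n₀] with n hn j _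
  by_contra hne
  exact hn₀ ((pathsFrom_nonempty_of_adjMatrix_pow_ne_zero N A hne).mono (pathsFrom_anti N A i hn))

lemma eq_zero_of_not_isLive {u : Fin N → ℤ}
    (hu : ∀ i, ¬IsLive N A i → (adjMatrix N A *ᵥ u) i = u i) {i : Fin N} (hi : ¬IsLive N A i) :
    u i = 0 := by
  -- a letter with a live successor is live, so `u = Aⁿ u` on the letters that are not live
  have hpow : ∀ n, ∀ k, ¬IsLive N A k → (adjMatrix N A ^ n *ᵥ u) k = u k := by
    intro n
    induction n with
    | zero => simp
    | succ n ih =>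
      intro k hk
      rw [pow_succ', ← mulVec_mulVec, ← hu k hk, mulVec, mulVec, dotProduct, dotProduct]
      refine Finset.sum_congr rfl fun j _ => ?_
      by_cases hkj : A k j = true
      · rw [ih j fun hj => hk (isLive_of_adj N A hkj hj)]
      · simp [adjMatrix, hkj]
  obtain ⟨n, hn⟩ := (eventually_adjMatrix_pow_eq_zero N A).exists
  rw [← hpow n i hi]
  simp [mulVec, dotProduct, hn i _ hi]

lemma exists_sub_cylinderValues_eq (v : Fin N → ℤ) :
    ∃ φ w, v - cylinderValues N A φ = w - adjMatrix N A *ᵥ w := by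
  obtain ⟨n, hn⟩ := (eventually_adjMatrix_pow_eq_zero N A).exists
  have hlive : ∀ i, ¬IsLive N A i → (adjMatrix N A ^ n *ᵥ v) i = 0 := fun i hi => by
    simp [mulVec, dotProduct, hn i _ hi]
  refine ⟨liftCylinderValues N A (adjMatrix N A ^ n *ᵥ v),
    (∑ m ∈ Finset.range n, adjMatrix N A ^ m) *ᵥ v, ?_⟩
  rw [cylinderValues_liftCylinderValues N A hlive]
  calc v - adjMatrix N A ^ n *ᵥ v = (1 - adjMatrix N A ^ n) *ᵥ v := by
        rw [sub_mulVec, one_mulVec]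
    _ = (1 - adjMatrix N A) *ᵥ ((∑ m ∈ Finset.range n, adjMatrix N A ^ m) *ᵥ v) := by
      rw [mulVec_mulVec, mul_neg_geom_sum]
    _ = _ := by rw [sub_mulVec, one_mulVec]

lemma exists_sub_comp_transfer_eq
    {L : LocallyConstant (Omega N A) ℤ →+ LocallyConstant (Omega N A) ℤ}
    (hL : IsTransferOperator N A L)
    (φ : LocallyConstant (Omega N A) ℤ →+ ℤ) (u : Fin N → ℤ)
    (hu : cylinderValues N A φ = u - adjMatrix N A *ᵥ u) :
    ∃ ψ : LocallyConstant (Omega N A) ℤ →+ ℤ, ψ - ψ.comp L = φ := by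
  have hdead : ∀ i, ¬IsLive N A i → u i = 0 := by
    refine fun i => eq_zero_of_not_isLive N A fun k hk => ?_
    have huk := congrFun hu k
    simp only [cylinderValues, AddMonoidHom.coe_mk, ZeroHom.coe_mk, Pi.sub_apply,
      cylinderIndicator_eq_zero N A hk, map_zero] at huk
    linarith
  refine exists_sub_comp_eq_of_filtration (fun n => constOnCylinders N A (n + 1))
    (fun _ _ h => constOnCylinders_mono N A (by omega)) (fun f => ?_) L
    (fun _ _ hf => transfer_mem_constOnCylinders N A hL hf) φ (liftCylinderValues N A u)
    (fun f hf => ?_)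
  · obtain ⟨n, hn⟩ := exists_mem_constOnCylinders N A f
    exact ⟨n, constOnCylinders_mono N A n.le_succ hn⟩
  · refine eq_of_cylinderValues_eq N A (α := _ - (liftCylinderValues N A u).comp L) ?_ hf
    rw [cylinderValues_sub_comp_transfer N A hL, cylinderValues_liftCylinderValues N A hdead,
      hu]

/-- The cokernel of `1 - 𝔏* : Hom(C(Ω_A,ℤ),ℤ) → Hom(C(Ω_A,ℤ),ℤ)` is isomorphic to
`ℤ^N/(1-A)ℤ^N`.  Here `C(Ω_A,ℤ)` is realised as the locally constant ℤ-valued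
functions on Ω_A, `L` is the transfer operator `𝔏(f)(x) = Σ_{σ(y)=x} f(y)`,
`Lstar` its dual `φ ↦ φ ∘ L`, and `T = 1 - A` acting on `ℤ^N`. -/
theorem stmt15
    (L : LocallyConstant (Omega N A) ℤ →+ LocallyConstant (Omega N A) ℤ)
    (hL : ∀ (f : LocallyConstant (Omega N A) ℤ) (x : Omega N A),
      L f x = ∑ j : Fin N, if h : A j (x.1 0) = true then f (cons N A j x h) else 0)
    (Lstar : (LocallyConstant (Omega N A) ℤ →+ ℤ) →+ (LocallyConstant (Omega N A) ℤ →+ ℤ))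
    (hLstar : ∀ (φ : LocallyConstant (Omega N A) ℤ →+ ℤ) (f : LocallyConstant (Omega N A) ℤ),
      Lstar φ f = φ (L f))
    (T : (Fin N → ℤ) →+ (Fin N → ℤ))
    (hT : ∀ (v : Fin N → ℤ) (i : Fin N),
      T v i = v i - ∑ j : Fin N, (if A i j = true then (1 : ℤ) else 0) * v j) :
    Nonempty (
      ((LocallyConstant (Omega N A) ℤ →+ ℤ) ⧸ (AddMonoidHom.id _ - Lstar).range)
        ≃+ ((Fin N → ℤ) ⧸ T.range)) := by
  have hLstar' : ∀ ψ,
      (AddMonoidHom.id (LocallyConstant (Omega N A) ℤ →+ ℤ) - Lstar) ψ = ψ - ψ.comp L :=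
    fun ψ => AddMonoidHom.ext fun f => by simp [hLstar]
  have hT' : ∀ v, T v = v - adjMatrix N A *ᵥ v := fun v =>
    funext fun i => by simp [hT, mulVec, dotProduct, adjMatrix]
  refine ⟨quotientAddEquivOfComap (cylinderValues N A) _ _ (fun φ => ⟨?_, ?_⟩) fun v => ?_⟩
  · rintro ⟨ψ, rfl⟩
    exact ⟨_, by rw [hT', hLstar', cylinderValues_sub_comp_transfer N A hL]⟩
  · rintro ⟨u, hu⟩
    obtain ⟨ψ, hψ⟩ := exists_sub_comp_transfer_eq N A hL φ u (by rw [← hu, hT'])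
    exact ⟨ψ, by rw [hLstar', hψ]⟩
  · obtain ⟨φ, w, hw⟩ := exists_sub_cylinderValues_eq N A v
    exact ⟨φ, w, by rw [hT', hw]⟩

end Stmt15
end

section
/- Let O_N be the Cuntz algebra with the KMS state φ(S_μS_ν*) = δ_{μ,ν} N^{-|μ|} for the gauge action. In the GNS space L²(O_N) write W_{μ,ν} for the image of S_μS_ν*. Then the finite-dimensional subspaces H_{n,k} defined by: H_{n,0} = span{W_{μ,∅} : |μ| = n} (n ≥ 0), H_{n,-n} = span{W_{∅,ν} : |ν| = -n} (n ≤ 0), and for n+k > 0, k > 0, H_{n,k} = span{N·W_{μi,νj} - δ_{i,j} W_{μ,ν} : |ν| = k-1, |μ|-|ν| = n, i,j = 1,…,N}, are pairwise orthogonal in L²(O_N). (Here μi denotes the word μ with letter i appended.) -/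
namespace Stmt16

variable {B : Type*} [Ring B] [StarRing B] [Algebra ℂ B] [StarModule ℂ B]

/-- For a word `w`, `Sw S w = S_{w₁} S_{w₂} ⋯`. -/
def Sw {N : ℕ} (S : Fin N → B) (w : List (Fin N)) : B := (w.map S).prod

/-- Generating sets of the subspaces H_{n,k} of L²(O_N): for k = 0 the vectors
`W_{μ,∅}` with |μ| = n; for n + k = 0 the vectors `W_{∅,ν}` with |ν| = -n; otherwise
the vectors `N·W_{μi,νj} - δ_{ij} W_{μ,ν}` with |ν| = k-1, |μ| - |ν| = n. -/
def GenSet {N : ℕ} (S : Fin N → B) (n : ℤ) (k : ℕ) : Set B :=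
  if k = 0 then {x | ∃ μ : List (Fin N), (μ.length : ℤ) = n ∧ x = Sw S μ}
  else if (n : ℤ) + k = 0 then
    {x | ∃ ν : List (Fin N), (ν.length : ℤ) = -n ∧ x = star (Sw S ν)}
  else
    {x | ∃ (μ ν : List (Fin N)) (i j : Fin N),
      (ν.length : ℤ) = (k : ℤ) - 1 ∧ (μ.length : ℤ) - (ν.length : ℤ) = n ∧
      x = (N : ℂ) • (Sw S (μ ++ [i]) * star (Sw S (ν ++ [j]))) -
          (if i = j then (1 : ℂ) else 0) • (Sw S μ * star (Sw S ν))}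

set_option linter.unusedSectionVars false
set_option maxHeartbeats 1000000

section Aux
variable {N : ℕ} (S : Fin N → B) {φ : B →ₗ[ℂ] ℂ}

lemma Sw_nil : Sw S ([] : List (Fin N)) = 1 := rfl
lemma Sw_cons (i : Fin N) (w : List (Fin N)) : Sw S (i :: w) = S i * Sw S w := by simp [Sw]
lemma Sw_append (u v : List (Fin N)) : Sw S (u ++ v) = Sw S u * Sw S v := by simp [Sw]

lemma concat_eq {X : Type*} (u v : List X) (i j : X) :
    u ++ [i] = v ++ [j] ↔ u = v ∧ i = j := by
  constructor
  · intro h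
    have h2 := List.append_inj' h rfl
    simpa using h2
  · rintro ⟨rfl, rfl⟩; rfl

lemma cond_concat {X : Type*} (a b m nn : List X) (p q : X) (hlen : m.length ≤ a.length) :
    (∃ γ, a ++ [p] = m ++ γ ∧ b ++ [q] = nn ++ γ) ↔
      ((∃ g, a = m ++ g ∧ b = nn ++ g) ∧ p = q) := by
  constructor
  · rintro ⟨γ, h1, h2⟩
    rcases List.eq_nil_or_concat γ with rfl | ⟨g, x, rfl⟩
    · exfalso
      have := congrArg List.length h1
      simp at this; omega
    · rw [List.concat_eq_append, ← List.append_assoc] at h1 h2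
      rw [concat_eq] at h1 h2
      exact ⟨⟨g, h1.1, h2.1⟩, h1.2.trans h2.2.symm⟩
  · rintro ⟨⟨g, rfl, rfl⟩, rfl⟩
    exact ⟨g ++ [p], by simp, by simp⟩

lemma star_Sw_mul_Sw (hrel : ∀ i j : Fin N, star (S i) * S j = if i = j then 1 else 0)
    (μ α : List (Fin N)) :
    star (Sw S μ) * Sw S α =
      if μ <+: α then Sw S (α.drop μ.length)
      else if α <+: μ then star (Sw S (μ.drop α.length)) else 0 := by
  induction μ generalizing α with
  | nil => simp [Sw_nil]
  | cons i μ ih =>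
    cases α with
    | nil => simp [Sw_nil]
    | cons j α =>
      rw [Sw_cons, Sw_cons, star_mul, mul_assoc, ← mul_assoc (star (S i)), hrel]
      by_cases hij : i = j
      · subst hij
        simp only [if_true, eq_self_iff_true, one_mul, ih, List.cons_prefix_cons, true_and,
          List.length_cons, List.drop_succ_cons]
      · simp [hij, List.cons_prefix_cons, Ne.symm hij]

variable (hrel : ∀ i j : Fin N, star (S i) * S j = if i = j then 1 else 0)
variable (hφ : ∀ μ ν : List (Fin N), φ (Sw S μ * star (Sw S ν)) =
      if μ = ν then (N : ℂ) ^ (-(μ.length : ℤ)) else 0)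

open scoped Classical in
include hrel hφ in
lemma ip_words (μ ν α β : List (Fin N)) :
    φ (star (Sw S μ * star (Sw S ν)) * (Sw S α * star (Sw S β))) =
      if ∃ γ, α = μ ++ γ ∧ β = ν ++ γ then (N : ℂ) ^ (-(β.length : ℤ))
      else if ∃ δ, μ = α ++ δ ∧ ν = β ++ δ then (N : ℂ) ^ (-(ν.length : ℤ))
      else 0 := by
  have e1 : star (Sw S μ * star (Sw S ν)) * (Sw S α * star (Sw S β)) =
      Sw S ν * ((star (Sw S μ) * Sw S α) * star (Sw S β)) := by
    simp only [star_mul, star_star, mul_assoc]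
  rw [e1, star_Sw_mul_Sw S hrel]
  by_cases h1 : μ <+: α
  · obtain ⟨γ, rfl⟩ := h1
    rw [if_pos ⟨γ, rfl⟩, List.drop_left, ← mul_assoc, ← Sw_append, hφ]
    by_cases h2 : β = ν ++ γ
    · subst h2
      rw [if_pos rfl, if_pos ⟨γ, rfl, rfl⟩]
    · have hc1 : ¬ ∃ γ', μ ++ γ = μ ++ γ' ∧ β = ν ++ γ' := by
        rintro ⟨γ', hγ', hβ⟩
        have : γ' = γ := (List.append_cancel_left hγ').symm
        exact h2 (by rw [hβ, this])
      have hc2 : ¬ ∃ δ, μ = (μ ++ γ) ++ δ ∧ ν = β ++ δ := by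
        rintro ⟨δ, hδ1, hδ2⟩
        have hl := congrArg List.length hδ1
        simp only [List.length_append] at hl
        have hγ0 : γ = [] := List.length_eq_zero_iff.mp (by omega)
        have hδ0 : δ = [] := List.length_eq_zero_iff.mp (by omega)
        subst hγ0; subst hδ0
        simp only [List.append_nil] at hδ2
        exact h2 (by simp [hδ2])
      rw [if_neg (fun h => h2 h.symm), if_neg hc1, if_neg hc2]
  · rw [if_neg h1]
    by_cases h2 : α <+: μ
    · obtain ⟨δ, rfl⟩ := h2
      rw [if_pos ⟨δ, rfl⟩, List.drop_left]
      have e2 : Sw S ν * (star (Sw S δ) * star (Sw S β)) =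
          Sw S ν * star (Sw S (β ++ δ)) := by rw [Sw_append, star_mul]
      rw [e2, hφ]
      by_cases h3 : ν = β ++ δ
      · rw [if_pos h3, if_neg, if_pos ⟨δ, rfl, h3⟩]
        rintro ⟨γ, hγ, -⟩
        exact h1 ⟨γ, hγ.symm⟩
      · rw [if_neg h3, if_neg, if_neg]
        · rintro ⟨δ', hδ', hν⟩
          have : δ' = δ := (List.append_cancel_left hδ').symm
          exact h3 (by rw [hν, this])
        · rintro ⟨γ, hγ, -⟩
          exact h1 ⟨γ, hγ.symm⟩
    · rw [if_neg h2]
      simp only [zero_mul, mul_zero, map_zero]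
      rw [if_neg, if_neg]
      · rintro ⟨δ, hδ, -⟩; exact h2 ⟨δ, hδ.symm⟩
      · rintro ⟨γ, hγ, -⟩; exact h1 ⟨γ, hγ.symm⟩

include hrel hφ in
lemma ip_symm (μ ν α β : List (Fin N)) :
    φ (star (Sw S μ * star (Sw S ν)) * (Sw S α * star (Sw S β))) =
      φ (star (Sw S α * star (Sw S β)) * (Sw S μ * star (Sw S ν))) := by
  classical
  rw [ip_words S hrel hφ, ip_words S hrel hφ]
  by_cases h1 : ∃ γ, α = μ ++ γ ∧ β = ν ++ γ
  · rw [if_pos h1]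
    by_cases h1' : ∃ γ, μ = α ++ γ ∧ ν = β ++ γ
    · rw [if_pos h1']
      obtain ⟨γ, hγ1, hγ2⟩ := h1
      obtain ⟨δ, hδ1, hδ2⟩ := h1'
      have hl1 := congrArg List.length hγ1
      have hl2 := congrArg List.length hδ1
      simp only [List.length_append] at hl1 hl2
      have hδ0 : δ = [] := List.length_eq_zero_iff.mp (by omega)
      subst hδ0
      simp only [List.append_nil] at hδ2
      rw [hδ2]
    · rw [if_neg h1', if_pos h1]
  · rw [if_neg h1]
    by_cases h2 : ∃ δ, μ = α ++ δ ∧ ν = β ++ δ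
    · rw [if_pos h2, if_pos h2]
    · rw [if_neg h2, if_neg h2, if_neg h1]

include hrel hφ in
lemma F_deg {μ ν α β : List (Fin N)}
    (hd : (μ.length : ℤ) - ν.length ≠ (α.length : ℤ) - β.length) :
    φ (star (Sw S μ * star (Sw S ν)) * (Sw S α * star (Sw S β))) = 0 := by
  classical
  rw [ip_words S hrel hφ, if_neg, if_neg]
  · rintro ⟨δ, rfl, rfl⟩
    simp only [List.length_append] at hd
    omega
  · rintro ⟨γ, rfl, rfl⟩
    simp only [List.length_append] at hd
    omega


include hrel hφ in
open scoped Classical in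
lemma ip_words_l (μ α β : List (Fin N)) :
    φ (star (Sw S μ) * (Sw S α * star (Sw S β))) =
      if α = μ ++ β then (N : ℂ) ^ (-(β.length : ℤ)) else 0 := by
  have h : star (Sw S μ) = star (Sw S μ * star (Sw S ([] : List (Fin N)))) := by
    simp [show Sw S ([] : List (Fin N)) = 1 from rfl]
  rw [h, ip_words S hrel hφ]
  by_cases hc : α = μ ++ β
  · rw [if_pos ⟨β, by simp [hc], by simp⟩, if_pos hc]
  · rw [if_neg, if_neg, if_neg hc]
    · rintro ⟨δ, h1, h2⟩
      have hβ : β = [] := by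
        have := congrArg List.length h2; simp at this
        exact List.length_eq_zero_iff.mp (by omega)
      have hδ : δ = [] := by
        have := congrArg List.length h2; simp at this
        exact List.length_eq_zero_iff.mp (by omega)
      subst hβ; subst hδ
      exact hc (by simp [h1])
    · rintro ⟨γ, h1, h2⟩
      simp only [List.nil_append] at h2
      exact hc (by rw [h1, h2])

include hrel hφ in
open scoped Classical in
lemma ip_words_r (ν α β : List (Fin N)) :
    φ (star (star (Sw S ν)) * (Sw S α * star (Sw S β))) =
      if β = ν ++ α then (N : ℂ) ^ (-(β.length : ℤ)) else 0 := by
  have h : star (star (Sw S ν)) = star (Sw S ([] : List (Fin N)) * star (Sw S ν)) := by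
    simp [show Sw S ([] : List (Fin N)) = 1 from rfl]
  rw [h, ip_words S hrel hφ]
  by_cases hc : β = ν ++ α
  · rw [if_pos ⟨α, by simp, hc⟩, if_pos hc]
  · rw [if_neg, if_neg, if_neg hc]
    · rintro ⟨δ, h1, h2⟩
      have hα : α = [] := by
        have := congrArg List.length h1; simp at this
        exact List.length_eq_zero_iff.mp (by omega)
      have hδ : δ = [] := by
        have := congrArg List.length h1; simp at this
        exact List.length_eq_zero_iff.mp (by omega)
      subst hα; subst hδ
      simp only [List.append_nil] at h2
      exact hc (by simp [h2])
    · rintro ⟨γ, h1, h2⟩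
      simp only [List.nil_append] at h1
      exact hc (by rw [h2, h1])

include hrel hφ in
lemma orthA (hN0 : (N : ℂ) ≠ 0) (μ α β : List (Fin N)) (p q : Fin N) :
    φ (star (Sw S μ) * ((N : ℂ) • (Sw S (α ++ [p]) * star (Sw S (β ++ [q]))) -
      (if p = q then (1 : ℂ) else 0) • (Sw S α * star (Sw S β)))) = 0 := by
  rw [mul_sub, mul_smul_comm, mul_smul_comm, map_sub, map_smul, map_smul,
    ip_words_l S hrel hφ, ip_words_l S hrel hφ]
  by_cases h : α = μ ++ β ∧ p = q
  · obtain ⟨rfl, rfl⟩ := h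
    rw [if_pos (by rw [List.append_assoc]), if_pos rfl, if_pos rfl]
    simp only [smul_eq_mul, List.length_append, List.length_singleton, one_mul]
    push_cast
    rw [show -((β.length : ℤ) + 1) = -(β.length : ℤ) - 1 by ring, zpow_sub_one₀ hN0]
    field_simp
    try ring
  · have h1 : ¬ (α ++ [p] = μ ++ (β ++ [q])) := by
      rw [← List.append_assoc, concat_eq]; exact h
    rw [if_neg h1]
    rcases (not_and_or.mp h) with h2 | h2
    · rw [if_neg h2]; simp
    · rw [if_neg (by simpa using h2)]; simp

include hrel hφ in
lemma orthB (hN0 : (N : ℂ) ≠ 0) (ν α β : List (Fin N)) (p q : Fin N) :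
    φ (star (star (Sw S ν)) * ((N : ℂ) • (Sw S (α ++ [p]) * star (Sw S (β ++ [q]))) -
      (if p = q then (1 : ℂ) else 0) • (Sw S α * star (Sw S β)))) = 0 := by
  rw [mul_sub, mul_smul_comm, mul_smul_comm, map_sub, map_smul, map_smul,
    ip_words_r S hrel hφ, ip_words_r S hrel hφ]
  by_cases h : β = ν ++ α ∧ p = q
  · obtain ⟨rfl, rfl⟩ := h
    rw [if_pos (by rw [List.append_assoc]), if_pos rfl, if_pos rfl]
    simp only [smul_eq_mul, List.length_append, List.length_singleton, one_mul]
    push_cast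
    rw [show -(((ν.length : ℤ) + α.length) + 1) = -((ν.length : ℤ) + α.length) - 1 by ring,
      zpow_sub_one₀ hN0]
    field_simp
    try ring
  · have h1 : ¬ (β ++ [q] = ν ++ (α ++ [p])) := by
      rw [← List.append_assoc, concat_eq]
      rintro ⟨hh1, hh2⟩
      exact h ⟨hh1, hh2.symm⟩
    rw [if_neg h1]
    rcases (not_and_or.mp h) with h2 | h2
    · rw [if_neg h2]; simp
    · rw [if_neg (by simpa using h2)]; simp


include hrel hφ in
open scoped Classical in
lemma orthC (hN0 : (N : ℂ) ≠ 0) (μ ν α β : List (Fin N)) (i j p q : Fin N)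
    (hlen : μ.length < α.length) :
    φ (star ((N : ℂ) • (Sw S (μ ++ [i]) * star (Sw S (ν ++ [j]))) -
        (if i = j then (1 : ℂ) else 0) • (Sw S μ * star (Sw S ν))) *
      ((N : ℂ) • (Sw S (α ++ [p]) * star (Sw S (β ++ [q]))) -
        (if p = q then (1 : ℂ) else 0) • (Sw S α * star (Sw S β)))) = 0 := by
  have hm1 : (μ ++ [i]).length ≤ α.length := by simp; omega
  have hm3 : μ.length ≤ α.length := le_of_lt hlen
  have hstarc : star (if i = j then (1 : ℂ) else 0) = (if i = j then (1 : ℂ) else 0) := by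
    split_ifs <;> simp
  have harith : (N : ℂ) * (N : ℂ) ^ (-(β.length : ℤ) - 1) = (N : ℂ) ^ (-(β.length : ℤ)) := by
    rw [zpow_sub_one₀ hN0]; field_simp
  have hF1 : φ (star (Sw S (μ ++ [i]) * star (Sw S (ν ++ [j]))) *
      (Sw S (α ++ [p]) * star (Sw S (β ++ [q])))) =
      if (∃ g, α = (μ ++ [i]) ++ g ∧ β = (ν ++ [j]) ++ g) ∧ p = q
        then (N : ℂ) ^ (-(β.length : ℤ) - 1) else 0 := by
    rw [ip_words S hrel hφ]
    have hc2 : ¬ ∃ δ, μ ++ [i] = (α ++ [p]) ++ δ ∧ ν ++ [j] = (β ++ [q]) ++ δ := by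
      rintro ⟨δ, h1, -⟩
      have := congrArg List.length h1; simp at this; omega
    by_cases hc : (∃ g, α = (μ ++ [i]) ++ g ∧ β = (ν ++ [j]) ++ g) ∧ p = q
    · rw [if_pos ((cond_concat α β (μ ++ [i]) (ν ++ [j]) p q hm1).mpr hc), if_pos hc]
      congr 1
      simp only [List.length_append, List.length_singleton]
      push_cast; ring
    · rw [if_neg (fun h => hc ((cond_concat α β (μ ++ [i]) (ν ++ [j]) p q hm1).mp h)),
        if_neg hc2, if_neg hc]
  have hF2 : φ (star (Sw S (μ ++ [i]) * star (Sw S (ν ++ [j]))) *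
      (Sw S α * star (Sw S β))) =
      if ∃ g, α = (μ ++ [i]) ++ g ∧ β = (ν ++ [j]) ++ g
        then (N : ℂ) ^ (-(β.length : ℤ)) else 0 := by
    rw [ip_words S hrel hφ]
    by_cases hc : ∃ g, α = (μ ++ [i]) ++ g ∧ β = (ν ++ [j]) ++ g
    · rw [if_pos hc, if_pos hc]
    · rw [if_neg hc, if_neg, if_neg hc]
      rintro ⟨δ, h1, h2⟩
      have hl := congrArg List.length h1; simp at hl
      have hδ : δ = [] := List.length_eq_zero_iff.mp (by omega)
      subst hδ
      simp only [List.append_nil] at h1 h2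
      exact hc ⟨[], by simp [← h1], by simp [← h2]⟩
  have hF3 : φ (star (Sw S μ * star (Sw S ν)) *
      (Sw S (α ++ [p]) * star (Sw S (β ++ [q])))) =
      if (∃ g, α = μ ++ g ∧ β = ν ++ g) ∧ p = q
        then (N : ℂ) ^ (-(β.length : ℤ) - 1) else 0 := by
    rw [ip_words S hrel hφ]
    have hc2 : ¬ ∃ δ, μ = (α ++ [p]) ++ δ ∧ ν = (β ++ [q]) ++ δ := by
      rintro ⟨δ, h1, -⟩
      have := congrArg List.length h1; simp at this; omega
    by_cases hc : (∃ g, α = μ ++ g ∧ β = ν ++ g) ∧ p = q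
    · rw [if_pos ((cond_concat α β μ ν p q hm3).mpr hc), if_pos hc]
      congr 1
      simp only [List.length_append, List.length_singleton]
      push_cast; ring
    · rw [if_neg (fun h => hc ((cond_concat α β μ ν p q hm3).mp h)), if_neg hc2, if_neg hc]
  have hF4 : φ (star (Sw S μ * star (Sw S ν)) * (Sw S α * star (Sw S β))) =
      if ∃ g, α = μ ++ g ∧ β = ν ++ g then (N : ℂ) ^ (-(β.length : ℤ)) else 0 := by
    rw [ip_words S hrel hφ]
    by_cases hc : ∃ g, α = μ ++ g ∧ β = ν ++ g
    · rw [if_pos hc, if_pos hc]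
    · rw [if_neg hc, if_neg, if_neg hc]
      rintro ⟨δ, h1, -⟩
      have := congrArg List.length h1; simp at this; omega
  rw [star_sub, star_smul, star_smul, star_natCast, hstarc, sub_mul, mul_sub, mul_sub,
    smul_mul_assoc, smul_mul_assoc, smul_mul_assoc, smul_mul_assoc,
    mul_smul_comm, mul_smul_comm, mul_smul_comm, mul_smul_comm]
  simp only [map_sub, map_smul, smul_eq_mul]
  rw [hF1, hF2, hF3, hF4]
  by_cases hpq : p = q
  · subst hpq
    by_cases hP : ∃ g, α = (μ ++ [i]) ++ g ∧ β = (ν ++ [j]) ++ g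
    · by_cases hQ : ∃ g, α = μ ++ g ∧ β = ν ++ g
      · simp only [hP, hQ, and_true, if_true, if_pos rfl]
        linear_combination ((N : ℂ) - (if i = j then (1 : ℂ) else 0)) * harith
      · simp only [hP, hQ, and_true, if_true, if_false, if_pos rfl]
        simp only [mul_zero, sub_zero, add_zero]
        linear_combination (N : ℂ) * harith
    · by_cases hQ : ∃ g, α = μ ++ g ∧ β = ν ++ g
      · simp only [hP, hQ, and_true, if_true, if_false, if_pos rfl]
        simp only [mul_zero, zero_sub, sub_zero]
        linear_combination (-(if i = j then (1 : ℂ) else 0)) * harith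
      · simp only [hP, hQ, false_and, if_false, mul_zero, sub_zero, zero_sub, neg_zero, sub_self]
  · simp [hpq]

lemma expand_l (x y z : B) (c d : ℝ) :
    φ (star ((c : ℂ) • x + (d : ℂ) • y) * z) =
      (c : ℂ) * φ (star x * z) + (d : ℂ) * φ (star y * z) := by
  simp [star_add, star_smul, add_mul, smul_mul_assoc, map_add, map_smul, smul_eq_mul,
    Complex.star_def, Complex.conj_ofReal]

lemma expand_r (z x y : B) (c d : ℝ) :
    φ (star z * ((c : ℂ) • x + (d : ℂ) • y)) =
      (c : ℂ) * φ (star z * x) + (d : ℂ) * φ (star z * y) := by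
  simp [mul_add, mul_smul_comm, map_add, map_smul, smul_eq_mul]

lemma expand_both (x y u v : B) (c₁ c₂ d₁ d₂ : ℝ) :
    φ (star ((c₁ : ℂ) • x + (c₂ : ℂ) • y) * ((d₁ : ℂ) • u + (d₂ : ℂ) • v)) =
      (c₁ : ℂ) * (d₁ : ℂ) * φ (star x * u) + (c₁ : ℂ) * (d₂ : ℂ) * φ (star x * v) +
      (c₂ : ℂ) * (d₁ : ℂ) * φ (star y * u) + (c₂ : ℂ) * (d₂ : ℂ) * φ (star y * v) := by
  rw [expand_l, expand_r, expand_r]; ring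

include hrel hφ in
lemma sum_symm (c₁ c₂ d₁ d₂ : ℝ) (μ₁ ν₁ μ₂ ν₂ α₁ β₁ α₂ β₂ : List (Fin N)) :
    φ (star ((c₁ : ℂ) • (Sw S μ₁ * star (Sw S ν₁)) + (c₂ : ℂ) • (Sw S μ₂ * star (Sw S ν₂))) *
        ((d₁ : ℂ) • (Sw S α₁ * star (Sw S β₁)) + (d₂ : ℂ) • (Sw S α₂ * star (Sw S β₂)))) =
      φ (star ((d₁ : ℂ) • (Sw S α₁ * star (Sw S β₁)) + (d₂ : ℂ) • (Sw S α₂ * star (Sw S β₂))) *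
        ((c₁ : ℂ) • (Sw S μ₁ * star (Sw S ν₁)) + (c₂ : ℂ) • (Sw S μ₂ * star (Sw S ν₂)))) := by
  rw [expand_both, expand_both,
    ip_symm S hrel hφ μ₁ ν₁ α₁ β₁, ip_symm S hrel hφ μ₁ ν₁ α₂ β₂,
    ip_symm S hrel hφ μ₂ ν₂ α₁ β₁, ip_symm S hrel hφ μ₂ ν₂ α₂ β₂]
  ring

lemma gen_decomp {n : ℤ} {k : ℕ} (hk : max 0 (-n) ≤ (k : ℤ)) {g : B}
    (hg : g ∈ GenSet S n k) :
    ∃ (c₁ c₂ : ℝ) (μ₁ ν₁ μ₂ ν₂ : List (Fin N)),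
      g = (c₁ : ℂ) • (Sw S μ₁ * star (Sw S ν₁)) + (c₂ : ℂ) • (Sw S μ₂ * star (Sw S ν₂)) ∧
      (μ₁.length : ℤ) - ν₁.length = n ∧ (μ₂.length : ℤ) - ν₂.length = n := by
  rw [GenSet] at hg
  split_ifs at hg with h0 hs
  · obtain ⟨μ, hμ, rfl⟩ := hg
    refine ⟨1, 0, μ, [], μ, [], ?_, by simpa using hμ, by simpa using hμ⟩
    simp [Sw_nil]
  · obtain ⟨ν, hν, rfl⟩ := hg
    refine ⟨1, 0, [], ν, [], ν, ?_, by simp; omega, by simp; omega⟩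
    simp [Sw_nil]
  · obtain ⟨μ, ν, i, j, hν, hμν, rfl⟩ := hg
    refine ⟨(N : ℝ), -(if i = j then 1 else 0), μ ++ [i], ν ++ [j], μ, ν, ?_, ?_, hμν⟩
    · have e1 : (((N : ℝ)) : ℂ) = (N : ℂ) := by norm_cast
      have e2 : ((-(if i = j then (1 : ℝ) else 0) : ℝ) : ℂ) =
          -(if i = j then (1 : ℂ) else 0) := by split_ifs <;> norm_num
      rw [e1, e2, neg_smul, ← sub_eq_add_neg]
    · simp only [List.length_append, List.length_singleton]
      push_cast
      omega

include hrel hφ in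
lemma key_lt (hN0 : (N : ℂ) ≠ 0) {n : ℤ} {k k' : ℕ} (hk : max 0 (-n) ≤ (k : ℤ))
    (hlt : k < k') {g g' : B} (hg : g ∈ GenSet S n k) (hg' : g' ∈ GenSet S n k') :
    φ (star g * g') = 0 := by
  have hk'0 : k' ≠ 0 := by omega
  have hnk' : (n : ℤ) + k' ≠ 0 := by
    have h1 : -n ≤ (k : ℤ) := le_trans (le_max_right _ _) hk
    omega
  rw [GenSet, if_neg hk'0, if_neg hnk'] at hg'
  obtain ⟨α, β, p, q, hβ, hαβ, rfl⟩ := hg'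
  rw [GenSet] at hg
  split_ifs at hg with h0 hs
  · obtain ⟨μ, hμ, rfl⟩ := hg
    exact orthA S hrel hφ hN0 μ α β p q
  · obtain ⟨ν, hν, rfl⟩ := hg
    exact orthB S hrel hφ hN0 ν α β p q
  · obtain ⟨μ, ν, i, j, hν, hμν, rfl⟩ := hg
    apply orthC S hrel hφ hN0
    have hcast : (k : ℤ) < (k' : ℤ) := by exact_mod_cast hlt
    have : (μ.length : ℤ) < (α.length : ℤ) := by omega
    exact_mod_cast this

include hrel hφ in
lemma key (hN : 0 < N) {n n' : ℤ} {k k' : ℕ} (hk : max 0 (-n) ≤ (k : ℤ))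
    (hk' : max 0 (-n') ≤ (k' : ℤ)) (hne : (n, k) ≠ (n', k')) {g g' : B}
    (hg : g ∈ GenSet S n k) (hg' : g' ∈ GenSet S n' k') :
    φ (star g * g') = 0 := by
  have hN0 : (N : ℂ) ≠ 0 := Nat.cast_ne_zero.mpr hN.ne'
  by_cases hnn : n = n'
  · subst hnn
    have hkk : k ≠ k' := fun h => hne (by rw [h])
    rcases lt_or_gt_of_ne hkk with hlt | hlt
    · exact key_lt S hrel hφ hN0 hk hlt hg hg'
    · obtain ⟨c₁, c₂, μ₁, ν₁, μ₂, ν₂, hdec, hd1, hd2⟩ := gen_decomp S hk hg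
      obtain ⟨d₁, d₂, α₁, β₁, α₂, β₂, hdec', he1, he2⟩ := gen_decomp S hk' hg'
      have hswap : φ (star g' * g) = 0 := key_lt S hrel hφ hN0 hk' hlt hg' hg
      calc φ (star g * g') = φ (star g' * g) := by
            rw [hdec, hdec']
            exact sum_symm S hrel hφ c₁ c₂ d₁ d₂ μ₁ ν₁ μ₂ ν₂ α₁ β₁ α₂ β₂
        _ = 0 := hswap
  · obtain ⟨c₁, c₂, μ₁, ν₁, μ₂, ν₂, hdec, hd1, hd2⟩ := gen_decomp S hk hg
    obtain ⟨d₁, d₂, α₁, β₁, α₂, β₂, hdec', he1, he2⟩ := gen_decomp S hk' hg'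
    rw [hdec, hdec', expand_both,
      F_deg S hrel hφ (by omega : (μ₁.length : ℤ) - ν₁.length ≠ (α₁.length : ℤ) - β₁.length),
      F_deg S hrel hφ (by omega : (μ₁.length : ℤ) - ν₁.length ≠ (α₂.length : ℤ) - β₂.length),
      F_deg S hrel hφ (by omega : (μ₂.length : ℤ) - ν₂.length ≠ (α₁.length : ℤ) - β₁.length),
      F_deg S hrel hφ (by omega : (μ₂.length : ℤ) - ν₂.length ≠ (α₂.length : ℤ) - β₂.length)]
    ring

end Aux

/-- In the GNS space of the Cuntz algebra O_N for the KMS state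
`φ(S_μ S_ν*) = δ_{μ,ν} N^{-|μ|}`, with inner product `⟨a,b⟩ = φ(a* b)`, the
finite-dimensional subspaces H_{n,k} spanned by `GenSet S n k` are pairwise
orthogonal. -/
theorem stmt16 (N : ℕ) (hN : 0 < N) (S : Fin N → B)
    (hrel : ∀ i j : Fin N, star (S i) * S j = if i = j then 1 else 0)
    (hcuntz : ∑ i : Fin N, S i * star (S i) = 1)
    (φ : B →ₗ[ℂ] ℂ)
    (hφ : ∀ μ ν : List (Fin N), φ (Sw S μ * star (Sw S ν)) =
      if μ = ν then (N : ℂ) ^ (-(μ.length : ℤ)) else 0)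
    (n n' : ℤ) (k k' : ℕ)
    (hk : max 0 (-n) ≤ (k : ℤ)) (hk' : max 0 (-n') ≤ (k' : ℤ))
    (hne : (n, k) ≠ (n', k'))
    (a b : B)
    (ha : a ∈ Submodule.span ℂ (GenSet S n k))
    (hb : b ∈ Submodule.span ℂ (GenSet S n' k')) :
    φ (star a * b) = 0 := by
  have hb' : ∀ g ∈ GenSet S n k, φ (star g * b) = 0 := by
    intro g hgmem
    induction hb using Submodule.span_induction with
    | mem x hx => exact key S hrel hφ hN hk hk' hne hgmem hx
    | zero => simp
    | add x y _ _ hx hy => rw [mul_add, map_add, hx, hy, add_zero]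
    | smul c x _ hx => rw [mul_smul_comm, map_smul, hx, smul_zero]
  induction ha using Submodule.span_induction with
  | mem x hx => exact hb' x hx
  | zero => simp
  | add x y _ _ hx hy => rw [star_add, add_mul, map_add, hx, hy, add_zero]
  | smul c x _ hx => rw [star_smul, smul_mul_assoc, map_smul, hx, smul_zero]

end Stmt16
end
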